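/- Let n ≥ 1. Let 𝔉_n¹ be the quotient of 𝔉̃_n¹ := {(k_0,k,m) ∈ ℤ × ℤⁿ × ℕ̄ⁿ : k + m ∈ ℕ̄ⁿ, and if i_1 := ε(m) ≤ n then k_0 + Σ_{i=1}^{i_1} k_i = 0 and k_j = 0 for all i_1 < j ≤ n} (subspace topology of ℤ × ℤⁿ × ℕ̄ⁿ, ℤ discrete) by the relation (k_0,k,m) ∼ (k_0',k',m') iff k_0 = k_0', k = k' and (m,m') ∈ R_∞, with the quotient topology. Let F¹ := {(k_0,κ,μ) ∈ ℤ × ℤⁿ × ℕ̄ⁿ_↗ : κ + μ ∈ ℕ̄ⁿ_↗, and if i_1 := ε(μ) ≤ n then κ_j = −k_0 for all i_1 ≤ j ≤ n}, with the subspace topology. Then the map [(k_0,k,m)] ↦ (k_0, f(k), f(m)), where f is the partial-sums map f(k) = (k_1, k_1+k_2, …, k_1+⋯+k_n), is a well-defined homeomorphism from 𝔉_n¹ onto F¹ that preserves the groupoid structure: it sends units (0,0,[m]) to units (0,0,f(m)) and satisfies Φ([(k_0',k',k+m)]·[(k_0,k,m)]) = Φ([(k_0',k',k+m)])·Φ([(k_0,k,m)]),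 where composition on both sides is (k_0',κ',κ+μ)·(k_0,κ,μ) = (k_0+k_0', κ+κ', μ). -/

import Mathlib

/-! Tuples in `ℕ̄ⁿ = (ℕ∞)ⁿ` (here `Fin n → ℕ∞`), their anchor and index (`0`-based: the
paper's `ε(m)` resp. `ι(m)`, with values in `{1, …, n+1}`, equals `anchor n m + 1` resp.
`indexv n m + 1`), partial sums, and the equivalence relation `R_∞`. -/

/-- The (`0`-based) *anchor* of `m ∈ ℕ̄ⁿ`: the least `i` with `m i = ⊤`, and `n` if there is
no such `i` (the convention `m_{n+1} := +∞` of the paper). -/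
noncomputable def anchor (n : ℕ) (m : Fin n → ℕ∞) : ℕ :=
  sInf {i : ℕ | n ≤ i ∨ ∃ h : i < n, m ⟨i, h⟩ = ⊤}

/-- The (`0`-based) *index* of `m ∈ ℕ̄ⁿ`: the least `i` with `m i ≠ 0`, and `n` if there is
no such `i` (the convention `m_{n+1} := +∞` of the paper). -/
noncomputable def indexv (n : ℕ) (m : Fin n → ℕ∞) : ℕ :=
  sInf {i : ℕ | n ≤ i ∨ ∃ h : i < n, m ⟨i, h⟩ ≠ 0}

/-- The partial-sums map `ℕ̄ⁿ → ℕ̄ⁿ`, `m ↦ (m₁, m₁+m₂, …, m₁+⋯+m_n)` (`+∞` absorbing). -/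
def psumE {n : ℕ} (m : Fin n → ℕ∞) : Fin n → ℕ∞ :=
  fun i => ∑ j ∈ Finset.Iic i, m j

/-- The partial-sums map `ℤⁿ → ℤⁿ`, `k ↦ (k₁, k₁+k₂, …, k₁+⋯+k_n)`. -/
def psumZ {n : ℕ} (k : Fin n → ℤ) : Fin n → ℤ :=
  fun i => ∑ j ∈ Finset.Iic i, k j

/-- The equivalence relation `R_∞` on `ℕ̄ⁿ`: `(m, m') ∈ R_∞` iff `ε(m) = ε(m')` and
`mᵢ = m'ᵢ` for all `i < ε(m)`. -/
def Rinf (n : ℕ) (m m' : Fin n → ℕ∞) : Prop :=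
  anchor n m = anchor n m' ∧ ∀ i : Fin n, (i : ℕ) < anchor n m → m i = m' i

/-- The sum `k + m ∈ ℕ̄` of `k : ℤ` and `m : ℕ̄` (with `k + ∞ = ∞`; for finite `m` the value
is clamped to `0` when `m + k < 0`, which is immaterial under the condition `m + k ≥ 0`). -/
def addZE (k : ℤ) (m : ℕ∞) : ℕ∞ :=
  if m = ⊤ then ⊤ else ((((m.toNat : ℤ) + k).toNat : ℕ) : ℕ∞)

/-- The componentwise sum `k + m ∈ ℕ̄ⁿ` of `k : ℤⁿ` and `m : ℕ̄ⁿ`. -/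
def addZv {n : ℕ} (k : Fin n → ℤ) (m : Fin n → ℕ∞) : Fin n → ℕ∞ :=
  fun i => addZE (k i) (m i)

/-- The condition `k + m ∈ ℕ̄ⁿ`: every component of the sum is `+∞` or a nonnegative
integer. -/
def okAdd {n : ℕ} (k : Fin n → ℤ) (m : Fin n → ℕ∞) : Prop :=
  ∀ i : Fin n, m i = ⊤ ∨ 0 ≤ ((m i).toNat : ℤ) + k i

/-- Membership in Sheu's groupoid `𝔉̃ₙ¹ ⊆ ℤ × ℤⁿ × ℕ̄ⁿ`: `k + m ∈ ℕ̄ⁿ` and, whenever the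
(paper, `1`-based) anchor `ε(m) = anchor n m + 1` is `≤ n` (i.e. `anchor n m < n`),
`k₀ + ∑_{i=1}^{ε(m)} kᵢ = 0` and `k_j = 0` for all `ε(m) < j ≤ n`. -/
def sphCond (n : ℕ) (k0 : ℤ) (k : Fin n → ℤ) (m : Fin n → ℕ∞) : Prop :=
  okAdd k m ∧ (anchor n m < n →
    (k0 + ∑ i : Fin n, (if (i : ℕ) ≤ anchor n m then k i else 0) = 0) ∧
    ∀ j : Fin n, anchor n m < (j : ℕ) → k j = 0)

/-- The elements of Sheu's groupoid `𝔉̃ₙ¹`, as a subspace of `ℤ × ℤⁿ × ℕ̄ⁿ`. -/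
abbrev SphF (n : ℕ) := {p : ℤ × (Fin n → ℤ) × (Fin n → ℕ∞) // sphCond n p.1 p.2.1 p.2.2}

/-- The setoid on `𝔉̃ₙ¹` identifying `(k₀,k,m)` and `(k₀',k',m')` iff `k₀ = k₀'`, `k = k'`
and `(m,m') ∈ R_∞`; the quotient `𝔉ₙ¹ = 𝔉̃ₙ¹/∼` carries the quotient topology. -/
def sphSetoid (n : ℕ) : Setoid (SphF n) where
  r p q := p.1.1 = q.1.1 ∧ p.1.2.1 = q.1.2.1 ∧ Rinf n p.1.2.2 q.1.2.2
  iseqv := by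
    constructor
    · exact fun p => ⟨rfl, rfl, rfl, fun _ _ => rfl⟩
    · intro p q h
      refine ⟨h.1.symm, h.2.1.symm, h.2.2.1.symm, fun i hi => ?_⟩
      rw [← h.2.2.1] at hi
      exact (h.2.2.2 i hi).symm
    · intro a b c h1 h2
      refine ⟨h1.1.trans h2.1, h1.2.1.trans h2.2.1, h1.2.2.1.trans h2.2.2.1, fun i hi => ?_⟩
      refine (h1.2.2.2 i hi).trans (h2.2.2.2 i ?_)
      rwa [← h1.2.2.1]

/-- The groupoid `ℱ¹ ⊆ ℤ × ℤⁿ × ℕ̄ⁿ_↗` of Definition 6.3: `μ` increasing, `κ + μ ∈ ℕ̄ⁿ_↗`,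
and `κ_j = -k₀` for all `ε(μ) ≤ j ≤ n` whenever `ε(μ) ≤ n`. -/
def FBig (n : ℕ) : Set (ℤ × (Fin n → ℤ) × (Fin n → ℕ∞)) :=
  {p | Monotone p.2.2 ∧ okAdd p.2.1 p.2.2 ∧ Monotone (addZv p.2.1 p.2.2) ∧
    (anchor n p.2.2 < n → ∀ j : Fin n, anchor n p.2.2 ≤ (j : ℕ) → p.2.1 j = -p.1)}

/-! Partial sums identify `ℤⁿ` with itself (the inverse takes successive differences) and map
`ℕ̄ⁿ` onto the increasing tuples, with fibres exactly the `R_∞`-classes: below the anchor a tuple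
is recovered from its partial sums by differences, and from the anchor on all partial sums are
`∞`. The groupoid conditions correspond under this dictionary, so `Φ` is a continuous bijection.

For continuity of the inverse at a point whose anchor `a` is finite: a saturated open set
containing the class of `(k₀, k, m)` contains every `(k₀, k, m')` with `m'` agreeing with `m`
below `a` and `m'_a = ∞`. The coordinates after `a` range over the compact space `ℕ̄ⁿ`, so the
tube lemma gives a neighbourhood of `∞` in the `a`-th coordinate that works uniformly, and the
`a`-th difference of nearby increasing tuples tends to `∞`. -/

open Filter Topology

section Anchor
variable {n : ℕ} {m m' : Fin n → ℕ∞}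

lemma anchor_le (m : Fin n → ℕ∞) : anchor n m ≤ n :=
  Nat.sInf_le (Or.inl le_rfl)

lemma anchor_eq_top (h : anchor n m < n) : m ⟨anchor n m, h⟩ = ⊤ := by
  obtain h' | ⟨_, e⟩ := Nat.sInf_mem (s := {i : ℕ | n ≤ i ∨ ∃ h : i < n, m ⟨i, h⟩ = ⊤})
    ⟨n, Or.inl le_rfl⟩
  · exact absurd h (not_lt.2 h')
  · exact e

lemma anchor_le_of_eq_top {i : Fin n} (h : m i = ⊤) : anchor n m ≤ i :=
  Nat.sInf_le (Or.inr ⟨i.2, h⟩)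

lemma lt_anchor_iff {i : Fin n} : (i : ℕ) < anchor n m ↔ ∀ j ≤ i, m j ≠ ⊤ := by
  refine ⟨fun hi j hj hjt => ?_, fun h => ?_⟩
  · have := anchor_le_of_eq_top hjt
    have : (j : ℕ) ≤ i := hj
    omega
  · by_contra! hle
    exact h ⟨anchor n m, by omega⟩ (Fin.le_def.2 hle) (anchor_eq_top _)

lemma ne_top_of_lt_anchor {i : Fin n} (h : (i : ℕ) < anchor n m) : m i ≠ ⊤ :=
  lt_anchor_iff.1 h i le_rfl

lemma anchor_congr (h : ∀ i : Fin n, (∀ j ≤ i, m j ≠ ⊤) ↔ ∀ j ≤ i, m' j ≠ ⊤) :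
    anchor n m = anchor n m' := by
  have hm := anchor_le m
  have hm' := anchor_le m'
  by_contra hne
  rcases Nat.lt_or_gt_of_ne hne with hlt | hlt
  · exact lt_irrefl (anchor n m)
      (lt_anchor_iff.2 ((h ⟨anchor n m, by omega⟩).2 (lt_anchor_iff.1 hlt)))
  · exact lt_irrefl (anchor n m')
      (lt_anchor_iff.2 ((h ⟨anchor n m', by omega⟩).1 (lt_anchor_iff.1 hlt)))

lemma anchor_eq_of_eq_top {a : ℕ} (ha : a < n) (hlt : ∀ i : Fin n, (i : ℕ) < a → m i ≠ ⊤)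
    (htop : m ⟨a, ha⟩ = ⊤) : anchor n m = a := by
  have : anchor n m ≤ a := anchor_le_of_eq_top htop
  by_contra hne
  exact hlt ⟨anchor n m, by omega⟩ (by simp only; omega) (anchor_eq_top _)

end Anchor

section PrevVal
variable {n : ℕ} {M : Type*}

def prevVal [Zero M] (f : Fin n → M) (i : Fin n) : M :=
  if h : 0 < (i : ℕ) then f ⟨i - 1, by omega⟩ else 0

lemma prevVal_congr [Zero M] {f g : Fin n → M} {i : Fin n} (h : ∀ j < i, f j = g j) :
    prevVal f i = prevVal g i := by
  unfold prevVal
  split_ifs with hi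
  · exact h _ (Fin.lt_def.2 (by simp only; omega))
  · rfl

lemma prevVal_rel {N : Type*} [Zero M] [Zero N] {f : Fin n → M} {g : Fin n → N} {i : Fin n}
    {P : M → N → Prop} (h0 : P 0 0) (h : ∀ j < i, P (f j) (g j)) :
    P (prevVal f i) (prevVal g i) := by
  unfold prevVal
  split_ifs with hi
  · exact h _ (Fin.lt_def.2 (by simp only; omega))
  · exact h0

lemma prevVal_le_of_monotone [AddCommMonoid M] [PartialOrder M] [CanonicallyOrderedAdd M]
    {f : Fin n → M} (hf : Monotone f) (i : Fin n) : prevVal f i ≤ f i :=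
  prevVal_rel (g := f) (P := fun x _ => x ≤ f i) zero_le fun _ hj => hf hj.le

lemma sum_Iic_eq_prevVal_add [AddCommMonoid M] (g : Fin n → M) (i : Fin n) :
    ∑ j ∈ Finset.Iic i, g j = prevVal (fun i => ∑ j ∈ Finset.Iic i, g j) i + g i := by
  unfold prevVal
  split_ifs with hi
  · have : Finset.Iic i = insert i (Finset.Iic ⟨i - 1, by omega⟩) := by
      ext j
      simp only [Finset.mem_Iic, Finset.mem_insert, Fin.le_def, Fin.ext_iff]
      omega
    rw [this, Finset.sum_insert (by simp [Fin.le_def]; omega), add_comm]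
  · have : Finset.Iic i = {i} := by
      ext j
      simp only [Finset.mem_Iic, Finset.mem_singleton, Fin.le_def, Fin.ext_iff]
      omega
    rw [this, Finset.sum_singleton, zero_add]

end PrevVal

section PartialSums
variable {n : ℕ}

lemma psumZ_eq_prevVal_add (k : Fin n → ℤ) (i : Fin n) :
    psumZ k i = prevVal (psumZ k) i + k i :=
  sum_Iic_eq_prevVal_add k i

lemma psumE_eq_prevVal_add (m : Fin n → ℕ∞) (i : Fin n) :
    psumE m i = prevVal (psumE m) i + m i :=
  sum_Iic_eq_prevVal_add m i

def diffZ (κ : Fin n → ℤ) : Fin n → ℤ :=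
  fun i => κ i - prevVal κ i

def diffE (μ : Fin n → ℕ∞) : Fin n → ℕ∞ :=
  fun i => if μ i = ⊤ then ⊤ else μ i - prevVal μ i

lemma diffZ_psumZ (k : Fin n → ℤ) : diffZ (psumZ k) = k := by
  funext i
  rw [diffZ, psumZ_eq_prevVal_add k i, add_sub_cancel_left]

lemma psumZ_diffZ (κ : Fin n → ℤ) : psumZ (diffZ κ) = κ := by
  funext i
  induction i using WellFoundedLT.induction with
  | _ i ih => rw [psumZ_eq_prevVal_add, prevVal_congr ih, diffZ, add_sub_cancel]

lemma psumE_eq_top_iff {m : Fin n → ℕ∞} {i : Fin n} : psumE m i = ⊤ ↔ ∃ j ≤ i, m j = ⊤ := by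
  simp [psumE, ENat.sum_eq_top]

lemma monotone_psumE (m : Fin n → ℕ∞) : Monotone (psumE m) := fun _ _ hij =>
  Finset.sum_le_sum_of_subset (Finset.Iic_subset_Iic.2 hij)

lemma anchor_psumE (m : Fin n → ℕ∞) : anchor n (psumE m) = anchor n m :=
  anchor_congr fun i => ⟨fun h j hj hjt => h j hj (psumE_eq_top_iff.2 ⟨j, le_rfl, hjt⟩),
    fun h j hj hjt => by
      obtain ⟨l, hl, hlt⟩ := psumE_eq_top_iff.1 hjt
      exact h l (hl.trans hj) hlt⟩

lemma psumE_congr {m m' : Fin n → ℕ∞} (h : Rinf n m m') : psumE m = psumE m' := by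
  funext i
  by_cases hi : (i : ℕ) < anchor n m
  · exact Finset.sum_congr rfl fun j hj =>
      h.2 j (lt_of_le_of_lt (Fin.le_def.1 (Finset.mem_Iic.1 hj)) hi)
  · have ha : anchor n m < n := by omega
    have ha' : anchor n m' < n := h.1 ▸ ha
    rw [psumE_eq_top_iff.2 ⟨_, Fin.le_def.2 (not_lt.1 hi), anchor_eq_top ha⟩,
      psumE_eq_top_iff.2 ⟨_, Fin.le_def.2 (by have := h.1; simp only; omega), anchor_eq_top ha'⟩]

lemma rinf_of_psumE_eq {m m' : Fin n → ℕ∞} (h : psumE m = psumE m') : Rinf n m m' := by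
  refine ⟨by rw [← anchor_psumE m, ← anchor_psumE m', h], fun i hi => ?_⟩
  have hne : prevVal (psumE m) i ≠ ⊤ :=
    ne_top_of_le_ne_top (ne_top_of_lt_anchor ((anchor_psumE m).symm ▸ hi))
      (prevVal_le_of_monotone (monotone_psumE m) i)
  have := congrFun h i
  rw [psumE_eq_prevVal_add, psumE_eq_prevVal_add m', h] at this
  exact WithTop.add_left_cancel (h ▸ hne) this

lemma diffE_eq_top_iff {μ : Fin n → ℕ∞} {i : Fin n} : diffE μ i = ⊤ ↔ μ i = ⊤ := by
  unfold diffE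
  split_ifs with h
  · simp [h]
  · exact ⟨fun h' => absurd (top_le_iff.1 (h' ▸ tsub_le_self)) h, fun h' => absurd h' h⟩

lemma ENat.top_tsub_of_ne_top {c : ℕ∞} (hc : c ≠ ⊤) : ⊤ - c = ⊤ := by
  lift c to ℕ using hc
  rfl

lemma diffE_eq_tsub {μ : Fin n → ℕ∞} {i : Fin n} (h : prevVal μ i ≠ ⊤) :
    diffE μ i = μ i - prevVal μ i := by
  unfold diffE
  split_ifs with hi
  · rw [hi, ENat.top_tsub_of_ne_top h]
  · rfl

lemma anchor_diffE (μ : Fin n → ℕ∞) : anchor n (diffE μ) = anchor n μ :=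
  anchor_congr fun _ => forall₂_congr fun _ _ => not_congr diffE_eq_top_iff

lemma psumE_diffE {μ : Fin n → ℕ∞} (hμ : Monotone μ) : psumE (diffE μ) = μ := by
  funext i
  induction i using WellFoundedLT.induction with
  | _ i ih =>
    by_cases htop : μ i = ⊤
    · rw [psumE_eq_top_iff.2 ⟨i, le_rfl, diffE_eq_top_iff.2 htop⟩, htop]
    · rw [psumE_eq_prevVal_add, prevVal_congr ih, diffE, if_neg htop,
        add_tsub_cancel_of_le (prevVal_le_of_monotone hμ i)]

end PartialSums

section AddNonneg

def AddNonneg (k : ℤ) (m : ℕ∞) : Prop :=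
  m = ⊤ ∨ 0 ≤ (m.toNat : ℤ) + k

lemma addZE_top (k : ℤ) : addZE k ⊤ = ⊤ := if_pos rfl

lemma addZE_coe (k : ℤ) (a : ℕ) : addZE k a = (((a : ℤ) + k).toNat : ℕ∞) := by
  simp [addZE]

lemma AddNonneg.add {k k' : ℤ} {m m' : ℕ∞} (h : AddNonneg k m) (h' : AddNonneg k' m') :
    AddNonneg (k + k') (m + m') := by
  induction m using ENat.recTopCoe with
  | top => exact Or.inl (top_add _)
  | coe a =>
  induction m' using ENat.recTopCoe with
  | top => exact Or.inl (add_top _)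
  | coe b =>
    simp only [AddNonneg, ENat.natCast_ne_top, ENat.toNat_natCast, false_or] at h h' ⊢
    rw [← Nat.cast_add, ENat.toNat_natCast]
    push_cast
    omega

lemma addZE_add {k k' : ℤ} {m m' : ℕ∞} (h : AddNonneg k m) (h' : AddNonneg k' m') :
    addZE (k + k') (m + m') = addZE k m + addZE k' m' := by
  induction m using ENat.recTopCoe with
  | top => simp [addZE_top]
  | coe a =>
  induction m' using ENat.recTopCoe with
  | top => simp [addZE_top]
  | coe b =>
    simp only [AddNonneg, ENat.natCast_ne_top, ENat.toNat_natCast, false_or] at h h'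
    rw [← Nat.cast_add, addZE_coe, addZE_coe, addZE_coe, ← Nat.cast_add]
    congr 1
    omega

lemma AddNonneg.sum {ι : Type*} {s : Finset ι} {k : ι → ℤ} {m : ι → ℕ∞}
    (h : ∀ j ∈ s, AddNonneg (k j) (m j)) : AddNonneg (∑ j ∈ s, k j) (∑ j ∈ s, m j) := by
  have := Finset.sum_induction (fun j => (k j, m j)) (fun x => AddNonneg x.1 x.2)
    (fun _ _ => AddNonneg.add) (Or.inr le_rfl) h
  rwa [Prod.fst_sum, Prod.snd_sum] at this

lemma addZE_sum {ι : Type*} {s : Finset ι} {k : ι → ℤ} {m : ι → ℕ∞}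
    (h : ∀ j ∈ s, AddNonneg (k j) (m j)) :
    addZE (∑ j ∈ s, k j) (∑ j ∈ s, m j) = ∑ j ∈ s, addZE (k j) (m j) := by
  classical
  induction s using Finset.induction_on with
  | empty => simp [addZE]
  | insert a s ha ih =>
    rw [Finset.forall_mem_insert] at h
    rw [Finset.sum_insert ha, Finset.sum_insert ha, Finset.sum_insert ha,
      addZE_add h.1 (AddNonneg.sum h.2), ih h.2]

lemma AddNonneg.tsub {k c : ℤ} {m p : ℕ∞} (hk : AddNonneg k m) (hc : AddNonneg c p)
    (hm : m ≠ ⊤) (hpm : p ≤ m) (hle : addZE c p ≤ addZE k m) : AddNonneg (k - c) (m - p) := by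
  lift m to ℕ using hm
  lift p to ℕ using ne_top_of_le_ne_top (ENat.natCast_ne_top m) hpm
  simp only [AddNonneg, ENat.natCast_ne_top, ENat.toNat_natCast, false_or, addZE_coe, Nat.cast_le]
    at hk hc hle hpm ⊢
  rw [← ENat.natCast_sub, ENat.toNat_natCast]
  omega

variable {n : ℕ}

lemma okAdd_psum {k : Fin n → ℤ} {m : Fin n → ℕ∞} (h : okAdd k m) :
    okAdd (psumZ k) (psumE m) :=
  fun _ => AddNonneg.sum fun j _ => h j

lemma addZv_psum {k : Fin n → ℤ} {m : Fin n → ℕ∞} (h : okAdd k m) :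
    addZv (psumZ k) (psumE m) = psumE (addZv k m) :=
  funext fun _ => addZE_sum fun j _ => h j

end AddNonneg

section Membership
variable {n : ℕ} {k0 : ℤ}

lemma sum_ite_le_eq_psumZ (k : Fin n → ℤ) {a : ℕ} (ha : a < n) :
    ∑ i : Fin n, (if (i : ℕ) ≤ a then k i else 0) = psumZ k ⟨a, ha⟩ := by
  rw [psumZ, ← Finset.filter_ge_eq_Iic, Finset.sum_filter]
  simp only [Fin.le_def]

lemma psumZ_eq_neg_of_sphCond {k : Fin n → ℤ} {m : Fin n → ℕ∞} (h : sphCond n k0 k m)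
    (ha : anchor n m < n) {j : Fin n} (hj : anchor n m ≤ j) : psumZ k j = -k0 := by
  obtain ⟨hsum, hzero⟩ := h.2 ha
  have : psumZ k j = ∑ i : Fin n, if (i : ℕ) ≤ anchor n m then k i else 0 := by
    rw [psumZ, ← Finset.filter_ge_eq_Iic, Finset.sum_filter]
    refine Finset.sum_congr rfl fun i _ => ?_
    have := hzero i
    split_ifs with h1 h2 h2 <;> first | rfl | omega
  omega

lemma mem_FBig_of_sphCond {k : Fin n → ℤ} {m : Fin n → ℕ∞} (h : sphCond n k0 k m) :
    (k0, psumZ k, psumE m) ∈ FBig n := by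
  refine ⟨monotone_psumE m, okAdd_psum h.1, ?_, fun ha j hj => ?_⟩
  · simpa only [addZv_psum h.1] using monotone_psumE _
  · simp only [anchor_psumE] at ha hj
    exact psumZ_eq_neg_of_sphCond h ha hj

lemma sphCond_diff_of_mem_FBig {κ : Fin n → ℤ} {μ : Fin n → ℕ∞} (hy : (k0, κ, μ) ∈ FBig n) :
    sphCond n k0 (diffZ κ) (diffE μ) := by
  obtain ⟨hμ, hok, hmono, hconst⟩ := hy
  simp only at hμ hok hmono hconst
  refine ⟨fun i => ?_, fun ha => ?_⟩
  · by_cases hi : μ i = ⊤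
    · exact Or.inl (diffE_eq_top_iff.2 hi)
    have hprev := prevVal_le_of_monotone hμ i
    rw [diffE, if_neg hi]
    exact AddNonneg.tsub (hok i) (prevVal_rel (Or.inr le_rfl) fun j _ => hok j) hi hprev
      (prevVal_rel (P := fun c p => addZE c p ≤ addZE (κ i) (μ i)) (by simp [addZE])
        fun j hj => hmono hj.le)
  · rw [anchor_diffE] at ha ⊢
    have hκ := hconst ha
    refine ⟨?_, fun j hj => ?_⟩
    · rw [sum_ite_le_eq_psumZ _ ha, psumZ_diffZ, hκ _ le_rfl, add_neg_cancel]
    · have hj0 : 0 < (j : ℕ) := by omega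
      rw [diffZ, prevVal, dif_pos hj0, hκ j hj.le, hκ _ (by simp only; omega), sub_self]

end Membership

section Saturation
variable {n : ℕ} {k0 : ℤ} {m m' : Fin n → ℕ∞}

lemma sphCond.of_rinf {k : Fin n → ℤ} (h : sphCond n k0 k m) (hr : Rinf n m m') :
    sphCond n k0 k m' := by
  obtain ⟨hanchor, hagree⟩ := hr
  refine ⟨fun i => ?_, fun ha => hanchor ▸ h.2 (hanchor ▸ ha)⟩
  rcases lt_trichotomy (i : ℕ) (anchor n m) with hlt | heq | hgt
  · exact hagree i hlt ▸ h.1 i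
  · rw [show i = ⟨anchor n m', by omega⟩ from Fin.ext (heq.trans hanchor)]
    exact Or.inl (anchor_eq_top _)
  · rw [(h.2 (by omega)).2 i hgt]
    exact Or.inr (by simp)

def splice (μ : Fin n → ℕ∞) (a : ℕ) (t : ℕ∞) (d : Fin n → ℕ∞) : Fin n → ℕ∞ :=
  fun i => if (i : ℕ) < a then μ i else if (i : ℕ) = a then t else d i

lemma continuous_splice (μ : Fin n → ℕ∞) (a : ℕ) :
    Continuous fun td : ℕ∞ × (Fin n → ℕ∞) => splice μ a td.1 td.2 :=
  continuous_pi fun i => by dsimp only [splice]; split_ifs <;> fun_prop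

lemma splice_eq_self {a : ℕ} (ha : a < n) (h : ∀ i : Fin n, (i : ℕ) < a → m' i = m i) :
    splice m a (m' ⟨a, ha⟩) m' = m' := by
  funext i
  dsimp only [splice]
  split_ifs with hlt heq
  · exact (h i hlt).symm
  · rw [show i = ⟨a, ha⟩ from Fin.ext heq]
  · rfl

lemma rinf_splice_top {a : ℕ} (ha : anchor n m = a) (han : a < n) (d : Fin n → ℕ∞) :
    Rinf n m (splice m a ⊤ d) := by
  have : anchor n (splice m a ⊤ d) = a :=
    anchor_eq_of_eq_top han
      (fun i hi => by simpa [splice, hi] using ne_top_of_lt_anchor (ha ▸ hi)) (by simp [splice])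
  exact ⟨ha.trans this.symm, fun i hi => by simp [splice, ha ▸ hi]⟩

end Saturation

section Topology
variable {n : ℕ}

lemma eventually_nhds_eq_below_anchor (μ : Fin n → ℕ∞) :
    ∀ᶠ μ' in 𝓝 μ, ∀ i : Fin n, (i : ℕ) < anchor n μ → μ' i = μ i := by
  refine eventually_all.2 fun i => ?_
  by_cases hi : (i : ℕ) < anchor n μ
  · filter_upwards [(continuous_apply i).continuousAt.preimage_mem_nhds
      ((ENat.isOpen_singleton (ne_top_of_lt_anchor hi)).mem_nhds rfl)] with μ' h _ using h
  · exact Eventually.of_forall fun _ h => absurd h hi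

lemma eventually_nhds_FBig_eq_below_anchor (y : FBig n) :
    ∀ᶠ y' : FBig n in 𝓝 y, y'.1.1 = y.1.1 ∧ y'.1.2.1 = y.1.2.1 ∧
      ∀ i : Fin n, (i : ℕ) < anchor n y.1.2.2 → y'.1.2.2 i = y.1.2.2 i := by
  obtain ⟨⟨k0, κ, μ⟩, hy⟩ := y
  have hamb : ∀ᶠ x in 𝓝 (k0, κ, μ), x.1 = k0 ∧ x.2.1 = κ ∧
      ∀ i : Fin n, (i : ℕ) < anchor n μ → x.2.2 i = μ i := by
    rw [nhds_prod_eq, nhds_prod_eq, nhds_discrete ℤ, nhds_discrete (Fin n → ℤ)]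
    exact (eventually_pure.2 rfl : ∀ᶠ x in pure k0, x = k0).prod_mk
      ((eventually_pure.2 rfl : ∀ᶠ x in pure κ, x = κ).prod_mk
        (eventually_nhds_eq_below_anchor μ))
  exact (continuous_subtype_val.tendsto (⟨_, hy⟩ : FBig n)).eventually hamb

lemma tendsto_diffE_anchor {μ : Fin n → ℕ∞} (ha : anchor n μ < n) :
    Tendsto (fun μ' => diffE μ' ⟨anchor n μ, ha⟩) (𝓝 μ) (𝓝 ⊤) := by
  have hprev : ∀ᶠ μ' in 𝓝 μ, prevVal μ' ⟨anchor n μ, ha⟩ = prevVal μ ⟨anchor n μ, ha⟩ :=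
    (eventually_nhds_eq_below_anchor μ).mono fun μ' h => prevVal_congr fun j hj => h j hj
  have hc : prevVal μ ⟨anchor n μ, ha⟩ ≠ ⊤ :=
    prevVal_rel (g := μ) (P := fun x _ => x ≠ ⊤) ENat.zero_ne_top fun _ hj =>
      ne_top_of_lt_anchor hj
  have := ((continuous_apply (⟨anchor n μ, ha⟩ : Fin n)).tendsto μ).enatSub
    tendsto_const_nhds (Or.inr hc)
  rw [anchor_eq_top ha, ENat.top_tsub_of_ne_top hc] at this
  exact this.congr' (hprev.mono fun μ' h => by dsimp only; rw [diffE_eq_tsub (h ▸ hc), h])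

end Topology

section Maps
variable {n : ℕ}

def sphToFBig (p : SphF n) : FBig n :=
  ⟨(p.1.1, psumZ p.1.2.1, psumE p.1.2.2), mem_FBig_of_sphCond p.2⟩

def fBigToSph (y : FBig n) : SphF n :=
  ⟨(y.1.1, diffZ y.1.2.1, diffE y.1.2.2), sphCond_diff_of_mem_FBig y.2⟩

def sphQuotEquivFBig (n : ℕ) : Quotient (sphSetoid n) ≃ FBig n where
  toFun := Quotient.lift sphToFBig fun _ _ ⟨h0, hk, hm⟩ =>
    Subtype.ext (by simp only [sphToFBig, h0, hk, psumE_congr hm])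
  invFun y := Quotient.mk _ (fBigToSph y)
  left_inv := Quotient.ind fun p => Quotient.sound
    ⟨rfl, diffZ_psumZ _, rinf_of_psumE_eq (psumE_diffE (monotone_psumE _))⟩
  right_inv y := Subtype.ext <| show (y.1.1, psumZ (diffZ y.1.2.1), psumE (diffE y.1.2.2)) = y.1 by
    rw [psumZ_diffZ, psumE_diffE y.2.1]

lemma continuous_sphToFBig : Continuous (sphToFBig (n := n)) := by
  refine Continuous.subtype_mk ?_ _
  unfold psumZ psumE
  fun_prop

end Maps

lemma continuous_mk_fBigToSph {n : ℕ} :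
    Continuous fun y : FBig n => Quotient.mk (sphSetoid n) (fBigToSph y) := by
  refine continuous_iff_continuousAt.2 fun y => tendsto_nhds.2 fun U hU hyU => ?_
  obtain ⟨O, hO, hOU⟩ := isOpen_induced_iff.1 (hU.preimage continuous_quot_mk)
  obtain ⟨⟨k0, κ, μ⟩, hy⟩ := y
  have hnear := eventually_nhds_FBig_eq_below_anchor (⟨_, hy⟩ : FBig n)
  by_cases ha : anchor n μ < n
  swap
  · filter_upwards [hnear] with y' ⟨h0, h1, h2⟩
    obtain rfl : y' = ⟨_, hy⟩ :=
      Subtype.ext (Prod.ext h0 (Prod.ext h1 (funext fun i => h2 i (by omega))))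
    exact hyU
  -- `O` is saturated, and splicing `⊤` in at the anchor stays in the `R_∞`-class of `diffE μ`
  have htop : ∀ d, (k0, diffZ κ, splice (diffE μ) (anchor n μ) ⊤ d) ∈ O := fun d => by
    have hr := rinf_splice_top (anchor_diffE μ) ha d
    let p : SphF n := ⟨(k0, diffZ κ, _), (sphCond_diff_of_mem_FBig hy).of_rinf hr⟩
    refine (Set.ext_iff.1 hOU p).2 (show Quotient.mk (sphSetoid n) p ∈ U from ?_)
    rwa [← Quotient.sound (show (sphSetoid n).r (fBigToSph ⟨_, hy⟩) p from ⟨rfl, rfl, hr⟩)]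
  have hT : ∀ᶠ t in 𝓝 ⊤, ∀ d ∈ Set.univ, (k0, diffZ κ, splice (diffE μ) (anchor n μ) t d) ∈ O :=
    isCompact_univ.eventually_forall_of_forall_eventually fun d _ =>
      (continuous_const.prodMk (continuous_const.prodMk (continuous_splice _ _))).continuousAt
        |>.preimage_mem_nhds (hO.mem_nhds (htop d))
  have hdiff := (tendsto_diffE_anchor ha).comp
    ((continuous_snd.comp (continuous_snd.comp continuous_subtype_val)).tendsto
      (⟨_, hy⟩ : FBig n))
  filter_upwards [hnear, hdiff.eventually hT] with y' ⟨h0, h1, h2⟩ hy'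
  refine (Set.ext_iff.1 hOU _).1 ?_
  have hbelow : ∀ i : Fin n, (i : ℕ) < anchor n μ → diffE y'.1.2.2 i = diffE μ i := fun i hi => by
    simp only [diffE, h2 i hi, prevVal_congr fun j hj => h2 j (lt_trans hj hi)]
  show (y'.1.1, diffZ y'.1.2.1, diffE y'.1.2.2) ∈ O
  rw [h0, h1, ← splice_eq_self ha hbelow]
  exact hy' _ trivial

theorem stmt_17_general (n : ℕ) :
    ∃ h : Quotient (sphSetoid n) ≃ₜ ↥(FBig n),
      -- the homeomorphism is induced by `(k₀,k,m) ↦ (k₀, f(k), f(m))`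
      (∀ p : SphF n, (h (Quotient.mk (sphSetoid n) p)).1
          = (p.1.1, psumZ p.1.2.1, psumE p.1.2.2)) ∧
      -- it sends units `(0,0,[m])` to units `(0,0,f(m))`
      (∀ (m : Fin n → ℕ∞) (h0 : sphCond n 0 (fun _ => 0) m),
        (h (Quotient.mk (sphSetoid n) ⟨(0, fun _ => 0, m), h0⟩)).1
          = (0, fun _ => 0, psumE m)) ∧
      -- it sends the composition `(k₀',k',k+m)·(k₀,k,m) = (k₀+k₀', k+k', m)` of `𝔉ₙ¹` to
      -- the composition `(k₀',κ',κ+μ)·(k₀,κ,μ) = (k₀+k₀', κ+κ', μ)` of `ℱ¹`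
      (∀ (k0 k0' : ℤ) (k k' : Fin n → ℤ) (m : Fin n → ℕ∞)
        (h1 : sphCond n k0 k m) (h2 : sphCond n k0' k' (addZv k m))
        (h3 : sphCond n (k0 + k0') (fun i => k i + k' i) m),
        (h (Quotient.mk (sphSetoid n) ⟨(k0 + k0', fun i => k i + k' i, m), h3⟩)).1
          = ((h (Quotient.mk (sphSetoid n) ⟨(k0, k, m), h1⟩)).1.1
               + (h (Quotient.mk (sphSetoid n) ⟨(k0', k', addZv k m), h2⟩)).1.1,
             fun i => (h (Quotient.mk (sphSetoid n) ⟨(k0, k, m), h1⟩)).1.2.1 i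
               + (h (Quotient.mk (sphSetoid n) ⟨(k0', k', addZv k m), h2⟩)).1.2.1 i,
             (h (Quotient.mk (sphSetoid n) ⟨(k0, k, m), h1⟩)).1.2.2)) :=
  ⟨{ toEquiv := sphQuotEquivFBig n
     continuous_toFun := continuous_sphToFBig.quotient_lift _
     continuous_invFun := continuous_mk_fBigToSph },
    fun _ => rfl,
    fun _ _ => Prod.ext rfl (Prod.ext (funext fun _ => Finset.sum_const_zero) rfl),
    fun _ _ _ _ _ _ _ _ => Prod.ext rfl (Prod.ext (funext fun _ => Finset.sum_add_distrib) rfl)⟩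

/-- For `n ≥ 1`, the map `[(k₀,k,m)] ↦ (k₀, f(k), f(m))` (with `f` the
partial-sums map) is a well-defined homeomorphism `𝔉ₙ¹ = 𝔉̃ₙ¹/∼ → ℱ¹` preserving the
groupoid structure: it sends units to units and compositions to compositions. -/
theorem stmt_17 (n : ℕ) (hn : 1 ≤ n) :
    ∃ h : Quotient (sphSetoid n) ≃ₜ ↥(FBig n),
      -- the homeomorphism is induced by `(k₀,k,m) ↦ (k₀, f(k), f(m))`
      (∀ p : SphF n, (h (Quotient.mk (sphSetoid n) p)).1
          = (p.1.1, psumZ p.1.2.1, psumE p.1.2.2)) ∧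
      -- it sends units `(0,0,[m])` to units `(0,0,f(m))`
      (∀ (m : Fin n → ℕ∞) (h0 : sphCond n 0 (fun _ => 0) m),
        (h (Quotient.mk (sphSetoid n) ⟨(0, fun _ => 0, m), h0⟩)).1
          = (0, fun _ => 0, psumE m)) ∧
      -- it sends the composition `(k₀',k',k+m)·(k₀,k,m) = (k₀+k₀', k+k', m)` of `𝔉ₙ¹` to
      -- the composition `(k₀',κ',κ+μ)·(k₀,κ,μ) = (k₀+k₀', κ+κ', μ)` of `ℱ¹`
      (∀ (k0 k0' : ℤ) (k k' : Fin n → ℤ) (m : Fin n → ℕ∞)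
        (h1 : sphCond n k0 k m) (h2 : sphCond n k0' k' (addZv k m))
        (h3 : sphCond n (k0 + k0') (fun i => k i + k' i) m),
        (h (Quotient.mk (sphSetoid n) ⟨(k0 + k0', fun i => k i + k' i, m), h3⟩)).1
          = ((h (Quotient.mk (sphSetoid n) ⟨(k0, k, m), h1⟩)).1.1
               + (h (Quotient.mk (sphSetoid n) ⟨(k0', k', addZv k m), h2⟩)).1.1,
             fun i => (h (Quotient.mk (sphSetoid n) ⟨(k0, k, m), h1⟩)).1.2.1 i
               + (h (Quotient.mk (sphSetoid n) ⟨(k0', k', addZv k m), h2⟩)).1.2.1 i,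
             (h (Quotient.mk (sphSetoid n) ⟨(k0, k, m), h1⟩)).1.2.2)) :=
  stmt_17_general n
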